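/- Let θ(t) be the solution of the gradient flow θ'(t) = −∇L(θ(t)) of the linear-attention cross-entropy loss started from the balanced initialization with scale α > 0. Then for every subject token s ∈ S and every t ≥ 0, W_KQ(s)(t) ≤ exp(2·p(s)·t)·α·√(|A|+1), where p(s) = Σ_{r∈R} p(s,r); and for every noise token z ∈ N and every t ≥ 0, W_KQ(z)(t) ≤ exp(2·T·t/|N|)·α·√(|A|+1). -/

import Mathlib

open MeasureTheory
open scoped RealInnerProductSpace BigOperators

/-- The vocabulary of the synthetic factual recall task: subjects, relations, answers,
noise tokens, and a distinguished EOS token. -/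
abbrev Tok (Sub Rel Ans Noi : Type) : Type := Sub ⊕ Rel ⊕ Ans ⊕ Noi ⊕ Unit

variable {Sub Rel Ans Noi : Type}

def Tok.sub (s : Sub) : Tok Sub Rel Ans Noi := Sum.inl s
def Tok.rel (r : Rel) : Tok Sub Rel Ans Noi := Sum.inr (Sum.inl r)
def Tok.ans (a : Ans) : Tok Sub Rel Ans Noi := Sum.inr (Sum.inr (Sum.inl a))
def Tok.noi (n : Noi) : Tok Sub Rel Ans Noi := Sum.inr (Sum.inr (Sum.inr (Sum.inl n)))
def Tok.eos : Tok Sub Rel Ans Noi := Sum.inr (Sum.inr (Sum.inr (Sum.inr ())))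

/-- The (non-factorized, coordinate-wise) parameters of the linear attention model:
the coordinates `Sum.inl (a, z)` are the entries `W_OV(a, z) = φ(a)ᵀ W_OV φ(z)` and the
coordinates `Sum.inr z` are the entries `W_KQ(z) = φ(z)ᵀ W_KQ φ(EOS)` (these coordinates
determine the model since the embeddings are orthonormal).  We endow the parameter space
with the Euclidean (Hilbert) structure, so that gradient flow on these coordinates is
the gradient flow of the paper. -/
abbrev Param (Sub Rel Ans Noi : Type) : Type :=
  EuclideanSpace ℝ ((Ans × Tok Sub Rel Ans Noi) ⊕ Tok Sub Rel Ans Noi)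

def WOV (θ : Param Sub Rel Ans Noi) (a : Ans) (z : Tok Sub Rel Ans Noi) : ℝ :=
  θ (Sum.inl (a, z))

def WKQ (θ : Param Sub Rel Ans Noi) (z : Tok Sub Rel Ans Noi) : ℝ :=
  θ (Sum.inr z)

/-- The first `T` tokens (content tokens and EOS) of a sequence from the data
distribution, 0-indexed by `Fin T`: the subject `s` sits at position `i`, the relation
`r` at position `j` (with `i ≠ j` among the first `T-1` positions), the remaining
positions among the first `T-1` hold noise tokens, and position `T-1` holds EOS. -/
def seqTok [DecidableEq Sub] [DecidableEq Rel] (T : ℕ) (s : Sub) (r : Rel)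
    (i j : Fin (T - 1)) (η : Fin (T - 1) → Noi) (t : Fin T) : Tok Sub Rel Ans Noi :=
  if h : (t : ℕ) < T - 1 then
    if (⟨t, h⟩ : Fin (T - 1)) = i then Tok.sub s
    else if (⟨t, h⟩ : Fin (T - 1)) = j then Tok.rel r
    else Tok.noi (η ⟨t, h⟩)
  else Tok.eos

/-- The logit assigned by the linear attention model to answer `a` on input `z_{1:T}`. -/
noncomputable def logit {T : ℕ} (θ : Param Sub Rel Ans Noi)
    (zs : Fin T → Tok Sub Rel Ans Noi) (a : Ans) : ℝ :=
  ∑ t : Fin T, WOV θ a (zs t) * WKQ θ (zs t)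

/-- The predicted next-token distribution `p̂(a | z_{1:T})` of the linear attention
model (softmax of the logits over the answers). -/
noncomputable def phat [Fintype Ans] {T : ℕ} (θ : Param Sub Rel Ans Noi)
    (zs : Fin T → Tok Sub Rel Ans Noi) (a : Ans) : ℝ :=
  Real.exp (logit θ zs a) / ∑ a' : Ans, Real.exp (logit θ zs a')

/-- The population cross-entropy loss `L(θ) = E_{z_{1:T+1} ∼ D}[-log p̂(z_{T+1} | z_{1:T})]`,
written as the explicit finite sum over the data distribution: `(s, r)` is drawn with
probability `p s r`, the ordered pair of distinct positions `(i, j)` uniformly among the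
`(T-1)(T-2)` possibilities, and the noise tokens i.i.d. uniformly from `Noi`. -/
noncomputable def lossLin [Fintype Sub] [Fintype Rel] [Fintype Ans] [Fintype Noi]
    [DecidableEq Sub] [DecidableEq Rel] (T : ℕ) (p : Sub → Rel → ℝ)
    (astar : Sub → Rel → Ans) (θ : Param Sub Rel Ans Noi) : ℝ :=
  ∑ s : Sub, ∑ r : Rel, ∑ i : Fin (T - 1), ∑ j ∈ Finset.univ \ {i},
    ∑ η : Fin (T - 1) → Noi,
      (p s r / (((T : ℝ) - 1) * ((T : ℝ) - 2)) *
          (1 / (Fintype.card Noi : ℝ)) ^ (T - 1)) *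
        (- Real.log (phat θ (seqTok T s r i j η) (astar s r)))

set_option synthInstance.maxSize 512 in
instance paramIndexDecEq {Sub Rel Ans Noi : Type} [DecidableEq Sub] [DecidableEq Rel]
    [DecidableEq Ans] [DecidableEq Noi] :
    DecidableEq ((Ans × Tok Sub Rel Ans Noi) ⊕ Tok Sub Rel Ans Noi) := inferInstance

section Aux
variable {Sub Rel Ans Noi : Type} [Fintype Sub] [Fintype Rel] [Fintype Ans] [Fintype Noi]
  [DecidableEq Sub] [DecidableEq Rel] [DecidableEq Ans] [DecidableEq Noi]

lemma hasFDerivAt_coord {ι : Type} [Fintype ι] (k : ι) (θ : EuclideanSpace ℝ ι) :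
    HasFDerivAt (fun θ' : EuclideanSpace ℝ ι => θ' k) (EuclideanSpace.proj (𝕜 := ℝ) k) θ :=
  (EuclideanSpace.proj (𝕜 := ℝ) k).hasFDerivAt

/-- derivative of the logit as a continuous linear map -/
noncomputable def dLogit (θ : Param Sub Rel Ans Noi) {T : ℕ}
    (zs : Fin T → Tok Sub Rel Ans Noi) (a : Ans) : Param Sub Rel Ans Noi →L[ℝ] ℝ :=
  ∑ t : Fin T, (WOV θ a (zs t) • EuclideanSpace.proj (Sum.inr (zs t))
      + WKQ θ (zs t) • EuclideanSpace.proj (Sum.inl (a, zs t)))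

lemma hasFDerivAt_logit (θ : Param Sub Rel Ans Noi) {T : ℕ}
    (zs : Fin T → Tok Sub Rel Ans Noi) (a : Ans) :
    HasFDerivAt (fun θ' => logit θ' zs a) (dLogit θ zs a) θ := by
  unfold logit dLogit WOV WKQ
  apply HasFDerivAt.fun_sum
  intro t _
  have h1 : HasFDerivAt (fun θ' : Param Sub Rel Ans Noi => θ' (Sum.inl (a, zs t)))
      (EuclideanSpace.proj (𝕜 := ℝ) (Sum.inl (a, zs t))) θ :=
    hasFDerivAt_coord _ θ
  have h2 : HasFDerivAt (fun θ' : Param Sub Rel Ans Noi => θ' (Sum.inr (zs t)))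
      (EuclideanSpace.proj (𝕜 := ℝ) (Sum.inr (zs t))) θ :=
    hasFDerivAt_coord _ θ
  exact h1.mul h2

end Aux
section Aux2
set_option linter.unusedSectionVars false
variable {Sub Rel Ans Noi : Type} [Fintype Sub] [Fintype Rel] [Fintype Ans] [Fintype Noi]
  [DecidableEq Sub] [DecidableEq Rel] [DecidableEq Ans] [DecidableEq Noi]

noncomputable def dTerm (θ : Param Sub Rel Ans Noi) {T : ℕ}
    (zs : Fin T → Tok Sub Rel Ans Noi) (a0 : Ans) : Param Sub Rel Ans Noi →L[ℝ] ℝ :=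
  (∑ a : Ans, phat θ zs a • dLogit θ zs a) - dLogit θ zs a0

lemma sumexp_pos {T : ℕ} [Nonempty Ans] (θ : Param Sub Rel Ans Noi)
    (zs : Fin T → Tok Sub Rel Ans Noi) :
    0 < ∑ a : Ans, Real.exp (logit θ zs a) :=
  Finset.sum_pos (fun a _ => Real.exp_pos _) Finset.univ_nonempty

lemma neg_log_phat {T : ℕ} (θ : Param Sub Rel Ans Noi)
    (zs : Fin T → Tok Sub Rel Ans Noi) (a0 : Ans) :
    -Real.log (phat θ zs a0)
      = Real.log (∑ a : Ans, Real.exp (logit θ zs a)) - logit θ zs a0 := by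
  have : Nonempty Ans := ⟨a0⟩
  unfold phat
  rw [Real.log_div (Real.exp_ne_zero _) (ne_of_gt (sumexp_pos θ zs)), Real.log_exp]
  ring

lemma hasFDerivAt_term (θ : Param Sub Rel Ans Noi) {T : ℕ}
    (zs : Fin T → Tok Sub Rel Ans Noi) (a0 : Ans) :
    HasFDerivAt (fun θ' => -Real.log (phat θ' zs a0)) (dTerm θ zs a0) θ := by
  have : Nonempty Ans := ⟨a0⟩
  have hfun : (fun θ' : Param Sub Rel Ans Noi => -Real.log (phat θ' zs a0))
      = fun θ' => Real.log (∑ a : Ans, Real.exp (logit θ' zs a)) - logit θ' zs a0 :=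
    funext fun θ' => neg_log_phat θ' zs a0
  rw [hfun]
  have h1 : HasFDerivAt (fun θ' : Param Sub Rel Ans Noi =>
      ∑ a : Ans, Real.exp (logit θ' zs a))
      (∑ a : Ans, Real.exp (logit θ zs a) • dLogit θ zs a) θ := by
    apply HasFDerivAt.fun_sum
    intro a _
    exact
      (Real.hasDerivAt_exp (logit θ zs a)).comp_hasFDerivAt θ (hasFDerivAt_logit θ zs a)
  have h2 : HasFDerivAt (fun θ' : Param Sub Rel Ans Noi =>
      Real.log (∑ a : Ans, Real.exp (logit θ' zs a)))
      ((∑ a : Ans, Real.exp (logit θ zs a))⁻¹ •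
        ∑ a : Ans, Real.exp (logit θ zs a) • dLogit θ zs a) θ := by
    exact
      (Real.hasDerivAt_log (ne_of_gt (sumexp_pos θ zs))).comp_hasFDerivAt θ h1
  have h3 := h2.sub (hasFDerivAt_logit θ zs a0)
  have hD : (∑ a : Ans, Real.exp (logit θ zs a))⁻¹ •
        (∑ a : Ans, Real.exp (logit θ zs a) • dLogit θ zs a)
      = ∑ a : Ans, phat θ zs a • dLogit θ zs a := by
    rw [Finset.smul_sum]
    refine Finset.sum_congr rfl fun a _ => ?_
    rw [smul_smul]
    congr 1
    unfold phat
    rw [div_eq_inv_mul]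
  rw [hD] at h3
  exact h3

noncomputable def cwt (T : ℕ) (p : Sub → Rel → ℝ) (s : Sub) (r : Rel) : ℝ :=
  p s r / (((T : ℝ) - 1) * ((T : ℝ) - 2)) * (1 / (Fintype.card Noi : ℝ)) ^ (T - 1)

noncomputable def dLoss (T : ℕ) (p : Sub → Rel → ℝ) (astar : Sub → Rel → Ans)
    (θ : Param Sub Rel Ans Noi) : Param Sub Rel Ans Noi →L[ℝ] ℝ :=
  ∑ s : Sub, ∑ r : Rel, ∑ i : Fin (T - 1), ∑ j ∈ Finset.univ \ {i},
    ∑ η : Fin (T - 1) → Noi,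
      cwt (Noi := Noi) T p s r • dTerm θ (seqTok T s r i j η) (astar s r)

lemma hasFDerivAt_loss (T : ℕ) (p : Sub → Rel → ℝ) (astar : Sub → Rel → Ans)
    (θ : Param Sub Rel Ans Noi) :
    HasFDerivAt (lossLin T p astar) (dLoss T p astar θ) θ := by
  unfold lossLin dLoss
  apply HasFDerivAt.fun_sum; intro s _
  apply HasFDerivAt.fun_sum; intro r _
  apply HasFDerivAt.fun_sum; intro i _
  apply HasFDerivAt.fun_sum; intro j _
  apply HasFDerivAt.fun_sum; intro η _
  exact (hasFDerivAt_term θ (seqTok T s r i j η) (astar s r)).const_mul _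

lemma grad_coord {ι : Type} [Fintype ι] [DecidableEq ι] (f : EuclideanSpace ℝ ι → ℝ)
    (θ : EuclideanSpace ℝ ι) (D : EuclideanSpace ℝ ι →L[ℝ] ℝ)
    (h : HasFDerivAt f D θ) (k : ι) :
    gradient f θ k = D (EuclideanSpace.single k 1) := by
  have hg := h.differentiableAt.hasGradientAt
  have h2 := hg.hasFDerivAt
  have h3 : (InnerProductSpace.toDual ℝ _) (gradient f θ) = D := h2.unique h
  rw [← h3, InnerProductSpace.toDual_apply_apply, EuclideanSpace.inner_single_right]
  simp

end Aux2
section Aux3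
set_option linter.unusedSectionVars false
set_option maxHeartbeats 1000000
variable {Sub Rel Ans Noi : Type} [Fintype Sub] [Fintype Rel] [Fintype Ans] [Fintype Noi]
  [DecidableEq Sub] [DecidableEq Rel] [DecidableEq Ans] [DecidableEq Noi]

/-- number of occurrences of token `z` in `zs`, as a real number -/
noncomputable def cnt {T : ℕ} (zs : Fin T → Tok Sub Rel Ans Noi)
    (z : Tok Sub Rel Ans Noi) : ℝ :=
  ∑ t : Fin T, if zs t = z then (1 : ℝ) else 0

lemma dLogit_apply_inr (θ : Param Sub Rel Ans Noi) {T : ℕ}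
    (zs : Fin T → Tok Sub Rel Ans Noi) (a : Ans) (z : Tok Sub Rel Ans Noi) :
    dLogit θ zs a (EuclideanSpace.single (Sum.inr z) 1) = cnt zs z * WOV θ a z := by
  unfold dLogit cnt
  rw [ContinuousLinearMap.sum_apply, Finset.sum_mul]
  refine Finset.sum_congr rfl fun t _ => ?_
  rw [ContinuousLinearMap.add_apply, ContinuousLinearMap.smul_apply,
    ContinuousLinearMap.smul_apply]
  by_cases h : zs t = z
  · subst h; simp [EuclideanSpace.single_apply, WOV]
  · simp [h, EuclideanSpace.single_apply, Ne.symm h]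

lemma dLogit_apply_inl (θ : Param Sub Rel Ans Noi) {T : ℕ}
    (zs : Fin T → Tok Sub Rel Ans Noi) (a a0 : Ans) (z : Tok Sub Rel Ans Noi) :
    dLogit θ zs a (EuclideanSpace.single (Sum.inl (a0, z)) 1)
      = (if a = a0 then (1:ℝ) else 0) * (cnt zs z * WKQ θ z) := by
  unfold dLogit cnt
  rw [ContinuousLinearMap.sum_apply]
  have : ∀ t : Fin T,
      ((WOV θ a (zs t) • EuclideanSpace.proj (𝕜 := ℝ) (Sum.inr (zs t))
        + WKQ θ (zs t) • EuclideanSpace.proj (𝕜 := ℝ) (Sum.inl (a, zs t))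
        : Param Sub Rel Ans Noi →L[ℝ] ℝ))
        (EuclideanSpace.single (Sum.inl (a0, z)) 1)
      = (if a = a0 then (1:ℝ) else 0) * ((if zs t = z then (1:ℝ) else 0) * WKQ θ z) := by
    intro t
    rw [ContinuousLinearMap.add_apply, ContinuousLinearMap.smul_apply,
      ContinuousLinearMap.smul_apply]
    by_cases h : a = a0
    · by_cases h2 : zs t = z
      · subst h; subst h2; simp [EuclideanSpace.single_apply, WKQ]
      · simp [h, h2, EuclideanSpace.single_apply, Prod.ext_iff]
    · simp [h, EuclideanSpace.single_apply, Prod.ext_iff]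
  rw [Finset.sum_congr rfl fun t _ => this t]
  rw [← Finset.mul_sum, ← Finset.sum_mul]

lemma dLoss_apply (T : ℕ) (p : Sub → Rel → ℝ) (astar : Sub → Rel → Ans)
    (θ : Param Sub Rel Ans Noi) (v : Param Sub Rel Ans Noi) :
    dLoss T p astar θ v
      = ∑ s : Sub, ∑ r : Rel, ∑ i : Fin (T - 1), ∑ j ∈ Finset.univ \ {i},
          ∑ η : Fin (T - 1) → Noi,
            cwt (Noi := Noi) T p s r *
              ((∑ a : Ans, phat θ (seqTok T s r i j η) a *
                  dLogit θ (seqTok T s r i j η) a v)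
                - dLogit θ (seqTok T s r i j η) (astar s r) v) := by
  unfold dLoss dTerm
  simp [ContinuousLinearMap.sum_apply, ContinuousLinearMap.smul_apply,
    ContinuousLinearMap.sub_apply, smul_eq_mul]

lemma balance (T : ℕ) (p : Sub → Rel → ℝ) (astar : Sub → Rel → Ans)
    (θ : Param Sub Rel Ans Noi) (z : Tok Sub Rel Ans Noi) :
    WKQ θ z * dLoss T p astar θ (EuclideanSpace.single (Sum.inr z) 1)
      = ∑ a0 : Ans, WOV θ a0 z *
          dLoss T p astar θ (EuclideanSpace.single (Sum.inl (a0, z)) 1) := by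
  set P : (Param Sub Rel Ans Noi →L[ℝ] ℝ) → Prop := fun D =>
    WKQ θ z * D (EuclideanSpace.single (Sum.inr z) 1)
      = ∑ a0 : Ans, WOV θ a0 z * D (EuclideanSpace.single (Sum.inl (a0, z)) 1) with hP
  have h0 : P 0 := by simp [hP]
  have hadd : ∀ D E, P D → P E → P (D + E) := by
    intro D E hD hE
    simp only [hP, ContinuousLinearMap.add_apply, mul_add, Finset.sum_add_distrib]
    rw [hD, hE]
  have hsmul : ∀ (c : ℝ) (D), P D → P (c • D) := by
    intro c D hD
    simp only [hP, ContinuousLinearMap.smul_apply, smul_eq_mul] at *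
    rw [show WKQ θ z * (c * D (EuclideanSpace.single (Sum.inr z) 1))
        = c * (WKQ θ z * D (EuclideanSpace.single (Sum.inr z) 1)) from by ring,
      hD, Finset.mul_sum]
    exact Finset.sum_congr rfl fun a0 _ => by ring
  have hsub : ∀ D E, P D → P E → P (D - E) := by
    intro D E hD hE
    simp only [hP, ContinuousLinearMap.sub_apply, mul_sub, Finset.sum_sub_distrib] at *
    rw [hD, hE]
  have hsum : ∀ {κ : Type} (s : Finset κ) (f : κ → Param Sub Rel Ans Noi →L[ℝ] ℝ),
      (∀ k ∈ s, P (f k)) → P (∑ k ∈ s, f k) := by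
    intro κ s f h
    exact Finset.sum_induction f P hadd h0 h
  have hbase : ∀ {T' : ℕ} (zs : Fin T' → Tok Sub Rel Ans Noi) (a : Ans),
      P (dLogit θ zs a) := by
    intro T' zs a
    simp only [hP, dLogit_apply_inr, dLogit_apply_inl]
    have : ∀ a0 : Ans, WOV θ a0 z * ((if a = a0 then (1:ℝ) else 0) * (cnt zs z * WKQ θ z))
        = if a = a0 then WOV θ a0 z * (cnt zs z * WKQ θ z) else 0 := by
      intro a0; by_cases h : a = a0 <;> simp [h]
    rw [Finset.sum_congr rfl fun a0 _ => this a0, Finset.sum_ite_eq]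
    simp only [Finset.mem_univ, if_true]
    ring
  show P _
  unfold dLoss
  refine hsum _ _ fun s _ => hsum _ _ fun r _ => hsum _ _ fun i _ => hsum _ _ fun j _ =>
    hsum _ _ fun η _ => hsmul _ _ ?_
  unfold dTerm
  exact hsub _ _ (hsum _ _ fun a _ => hsmul _ _ (hbase _ a)) (hbase _ (astar s r))

end Aux3
section Aux4
set_option linter.unusedSectionVars false
set_option maxHeartbeats 1000000
variable {Sub Rel Ans Noi : Type} [Fintype Sub] [Fintype Rel] [Fintype Ans] [Fintype Noi]
  [DecidableEq Sub] [DecidableEq Rel] [DecidableEq Ans] [DecidableEq Noi]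

lemma cnt_nonneg {T : ℕ} (zs : Fin T → Tok Sub Rel Ans Noi) (z : Tok Sub Rel Ans Noi) :
    0 ≤ cnt zs z :=
  Finset.sum_nonneg fun t _ => by positivity

lemma seqTok_eq_sub_iff {T : ℕ} (s : Sub) (r : Rel) (i j : Fin (T - 1))
    (η : Fin (T - 1) → Noi) (t : Fin T) (s0 : Sub) :
    seqTok (Ans := Ans) (Noi := Noi) T s r i j η t = Tok.sub s0
      ↔ ∃ h : (t : ℕ) < T - 1, (⟨t, h⟩ : Fin (T - 1)) = i ∧ s = s0 := by
  unfold seqTok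
  split_ifs with h h1 h2 <;>
    simp_all [Tok.sub, Tok.rel, Tok.noi, Tok.eos]

lemma seqTok_eq_noi_iff {T : ℕ} (s : Sub) (r : Rel) (i j : Fin (T - 1))
    (η : Fin (T - 1) → Noi) (t : Fin T) (n : Noi) :
    seqTok (Ans := Ans) T s r i j η t = Tok.noi n
      ↔ ∃ h : (t : ℕ) < T - 1,
          (⟨t, h⟩ : Fin (T - 1)) ≠ i ∧ (⟨t, h⟩ : Fin (T - 1)) ≠ j ∧ η ⟨t, h⟩ = n := by
  unfold seqTok
  split_ifs with h h1 h2 <;>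
    simp_all [Tok.sub, Tok.rel, Tok.noi, Tok.eos]

lemma cnt_sub_le {T : ℕ} (s : Sub) (r : Rel) (i j : Fin (T - 1))
    (η : Fin (T - 1) → Noi) (s0 : Sub) :
    cnt (seqTok (Ans := Ans) T s r i j η) (Tok.sub s0)
      ≤ if s = s0 then (1 : ℝ) else 0 := by
  by_cases hs : s = s0
  · subst hs
    rw [if_pos rfl]
    unfold cnt
    have hlt : (i : ℕ) < T := lt_of_lt_of_le i.isLt (Nat.sub_le T 1)
    calc ∑ t : Fin T, (if seqTok (Ans := Ans) T s r i j η t = Tok.sub s then (1:ℝ) else 0)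
        ≤ ∑ t : Fin T, (if t = (⟨(i : ℕ), hlt⟩ : Fin T) then (1:ℝ) else 0) := by
          refine Finset.sum_le_sum fun t _ => ?_
          by_cases hc : seqTok (Ans := Ans) (Noi := Noi) T s r i j η t = Tok.sub s
          · rw [if_pos hc]
            obtain ⟨h, h1, -⟩ := (seqTok_eq_sub_iff s r i j η t s).1 hc
            have : t = (⟨(i : ℕ), hlt⟩ : Fin T) := by
              apply Fin.ext
              simpa using congrArg Fin.val h1
            rw [if_pos this]
          · rw [if_neg hc]
            positivity
      _ = 1 := by simp
  · rw [if_neg hs]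
    refine le_of_eq (Finset.sum_eq_zero fun t _ => ?_)
    rw [if_neg]
    intro hc
    obtain ⟨-, -, h⟩ := (seqTok_eq_sub_iff s r i j η t s0).1 hc
    exact hs h

lemma cnt_noi_le {T : ℕ} (s : Sub) (r : Rel) (i j : Fin (T - 1))
    (η : Fin (T - 1) → Noi) (n : Noi) :
    cnt (seqTok (Ans := Ans) T s r i j η) (Tok.noi n)
      ≤ ∑ u : Fin (T - 1), if η u = n then (1 : ℝ) else 0 := by
  unfold cnt
  have key : ∀ t : Fin T,
      (if seqTok (Ans := Ans) T s r i j η t = Tok.noi n then (1:ℝ) else 0)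
      ≤ ∑ u : Fin (T - 1), if ((u : ℕ) = (t : ℕ) ∧ η u = n) then (1:ℝ) else 0 := by
    intro t
    by_cases hc : seqTok (Ans := Ans) (Sub := Sub) (Rel := Rel) T s r i j η t = Tok.noi n
    · rw [if_pos hc]
      obtain ⟨h, -, -, h3⟩ := (seqTok_eq_noi_iff s r i j η t n).1 hc
      have := Finset.single_le_sum
        (f := fun u : Fin (T-1) => if ((u : ℕ) = (t : ℕ) ∧ η u = n) then (1:ℝ) else 0)
        (fun u _ => by positivity) (Finset.mem_univ (⟨(t : ℕ), h⟩ : Fin (T - 1)))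
      simpa [h3] using this
    · rw [if_neg hc]
      exact Finset.sum_nonneg fun u _ => by positivity
  calc ∑ t : Fin T, (if seqTok (Ans := Ans) T s r i j η t = Tok.noi n then (1:ℝ) else 0)
      ≤ ∑ t : Fin T, ∑ u : Fin (T - 1), if ((u : ℕ) = (t : ℕ) ∧ η u = n) then (1:ℝ) else 0 :=
        Finset.sum_le_sum fun t _ => key t
    _ = ∑ u : Fin (T - 1), ∑ t : Fin T, if ((u : ℕ) = (t : ℕ) ∧ η u = n) then (1:ℝ) else 0 :=
        Finset.sum_comm
    _ ≤ ∑ u : Fin (T - 1), if η u = n then (1 : ℝ) else 0 := by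
        refine Finset.sum_le_sum fun u _ => ?_
        by_cases hn : η u = n
        · have hlt : (u : ℕ) < T := lt_of_lt_of_le u.isLt (Nat.sub_le T 1)
          have : ∀ t : Fin T, (if ((u : ℕ) = (t : ℕ) ∧ η u = n) then (1:ℝ) else 0)
              = if t = (⟨(u : ℕ), hlt⟩ : Fin T) then (1:ℝ) else 0 := by
            intro t
            by_cases ht : (u : ℕ) = (t : ℕ)
            · rw [if_pos ⟨ht, hn⟩, if_pos (Fin.ext ht.symm)]
            · rw [if_neg (fun hx => ht hx.1), if_neg (fun hx => ht (by simp [hx]))]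
          rw [Finset.sum_congr rfl fun t _ => this t]
          simp [hn]
        · simp [hn]
  
end Aux4
section Aux5
set_option linter.unusedSectionVars false
set_option maxHeartbeats 1000000
variable {Sub Rel Ans Noi : Type} [Fintype Sub] [Fintype Rel] [Fintype Ans] [Fintype Noi]
  [DecidableEq Sub] [DecidableEq Rel] [DecidableEq Ans] [DecidableEq Noi]

lemma denom_nonneg (T : ℕ) : 0 ≤ ((T : ℝ) - 1) * ((T : ℝ) - 2) := by
  rcases T with _ | _ | T
  · norm_num
  · norm_num
  · have h : (2 : ℝ) ≤ ((T + 2 : ℕ) : ℝ) := by push_cast; linarith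
    nlinarith

lemma cwt_nonneg (T : ℕ) (p : Sub → Rel → ℝ) (hp0 : ∀ s r, 0 ≤ p s r) (s : Sub) (r : Rel) :
    0 ≤ cwt (Noi := Noi) T p s r := by
  unfold cwt
  have := denom_nonneg T
  have h2 : (0:ℝ) ≤ 1 / (Fintype.card Noi : ℝ) := by positivity
  exact mul_nonneg (div_nonneg (hp0 s r) this) (pow_nonneg h2 _)

lemma pairs_le (T : ℕ) :
    (((T - 1 : ℕ) : ℝ)) * (((T - 1 - 1 : ℕ) : ℝ)) * (1 / (((T : ℝ) - 1) * ((T : ℝ) - 2)))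
      ≤ 1 := by
  rcases T with _ | _ | _ | T
  · norm_num
  · norm_num
  · norm_num
  · have h1 : ((T + 3 - 1 : ℕ) : ℝ) = ((T + 3 : ℕ) : ℝ) - 1 := by push_cast; ring
    have h2 : ((T + 3 - 1 - 1 : ℕ) : ℝ) = ((T + 3 : ℕ) : ℝ) - 2 := by push_cast; ring
    rw [h1, h2]
    have h3 : (0:ℝ) < (((T + 3 : ℕ) : ℝ) - 1) * (((T + 3 : ℕ) : ℝ) - 2) := by
      have : (3 : ℝ) ≤ ((T + 3 : ℕ) : ℝ) := by push_cast; linarith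
      nlinarith
    rw [mul_one_div, div_self (ne_of_gt h3)]

lemma noipow_le (m : ℕ) :
    ((Fintype.card Noi : ℝ)) ^ m * (1 / (Fintype.card Noi : ℝ)) ^ m ≤ 1 := by
  rw [← mul_pow]
  apply pow_le_one₀
  · positivity
  · rcases Nat.eq_zero_or_pos (Fintype.card Noi) with h | h
    · simp [h]
    · rw [mul_one_div, div_self (by positivity : (Fintype.card Noi : ℝ) ≠ 0)]

/-- total mass of the (i, j, η) part of the weights -/
lemma wt_total (T : ℕ) (p : Sub → Rel → ℝ) (hp0 : ∀ s r, 0 ≤ p s r) (s : Sub) (r : Rel) :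
    ∑ i : Fin (T - 1), ∑ j ∈ Finset.univ \ {i}, ∑ η : Fin (T - 1) → Noi,
        cwt (Noi := Noi) T p s r ≤ p s r := by
  have hcard : ∀ i : Fin (T - 1), (Finset.univ \ {i} : Finset (Fin (T - 1))).card
      = T - 1 - 1 := by
    intro i
    rw [Finset.card_sdiff_of_subset (by simp)]
    simp
  have hfun : Fintype.card (Fin (T - 1) → Noi) = Fintype.card Noi ^ (T - 1) := by
    simp [Fintype.card_fun]
  calc ∑ i : Fin (T - 1), ∑ j ∈ Finset.univ \ {i}, ∑ η : Fin (T - 1) → Noi,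
        cwt (Noi := Noi) T p s r
      = ((T - 1 : ℕ) : ℝ) * (((T - 1 - 1 : ℕ)) : ℝ) * ((Fintype.card Noi ^ (T - 1) : ℕ) : ℝ)
          * cwt (Noi := Noi) T p s r := by
        simp only [Finset.sum_const, nsmul_eq_mul]
        rw [Finset.sum_congr rfl fun i _ => by rw [hcard i]]
        simp only [Finset.sum_const, nsmul_eq_mul, Finset.card_univ, Fintype.card_fin, hfun]
        push_cast
        ring
    _ ≤ p s r := by
        unfold cwt
        rw [show ((T - 1 : ℕ) : ℝ) * (((T - 1 - 1 : ℕ)) : ℝ) * ((Fintype.card Noi ^ (T - 1) : ℕ) : ℝ)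
            * (p s r / (((T : ℝ) - 1) * ((T : ℝ) - 2)) * (1 / (Fintype.card Noi : ℝ)) ^ (T - 1))
          = p s r * (((T - 1 : ℕ) : ℝ) * (((T - 1 - 1 : ℕ)) : ℝ)
              * (1 / (((T : ℝ) - 1) * ((T : ℝ) - 2))))
            * (((Fintype.card Noi : ℝ)) ^ (T - 1) * (1 / (Fintype.card Noi : ℝ)) ^ (T - 1)) from by
          push_cast; ring]
        calc p s r * (((T - 1 : ℕ) : ℝ) * (((T - 1 - 1 : ℕ)) : ℝ)
              * (1 / (((T : ℝ) - 1) * ((T : ℝ) - 2))))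
            * (((Fintype.card Noi : ℝ)) ^ (T - 1) * (1 / (Fintype.card Noi : ℝ)) ^ (T - 1))
            ≤ p s r * 1 * 1 := by
              have hA := pairs_le T
              have hB := noipow_le (Noi := Noi) (T - 1)
              have hA0 : 0 ≤ ((T - 1 : ℕ) : ℝ) * (((T - 1 - 1 : ℕ)) : ℝ)
                  * (1 / (((T : ℝ) - 1) * ((T : ℝ) - 2))) := by
                have := denom_nonneg T
                positivity
              have hB0 : 0 ≤ ((Fintype.card Noi : ℝ)) ^ (T - 1)
                  * (1 / (Fintype.card Noi : ℝ)) ^ (T - 1) := by positivity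
              have hp := hp0 s r
              apply mul_le_mul
              · exact mul_le_mul_of_nonneg_left hA hp
              · exact hB
              · exact hB0
              · positivity
          _ = p s r := by ring

lemma sum_cwt_cnt_sub (T : ℕ) (p : Sub → Rel → ℝ) (hp0 : ∀ s r, 0 ≤ p s r) (s0 : Sub) :
    ∑ s : Sub, ∑ r : Rel, ∑ i : Fin (T - 1), ∑ j ∈ Finset.univ \ {i},
        ∑ η : Fin (T - 1) → Noi,
          cwt (Noi := Noi) T p s r * cnt (seqTok (Ans := Ans) T s r i j η) (Tok.sub s0)
      ≤ ∑ r : Rel, p s0 r := by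
  have key : ∀ s : Sub, ∑ r : Rel, ∑ i : Fin (T - 1), ∑ j ∈ Finset.univ \ {i},
      ∑ η : Fin (T - 1) → Noi,
        cwt (Noi := Noi) T p s r * cnt (seqTok (Ans := Ans) T s r i j η) (Tok.sub s0)
      ≤ if s = s0 then ∑ r : Rel, p s0 r else 0 := by
    intro s
    by_cases hs : s = s0
    · subst hs
      rw [if_pos rfl]
      refine Finset.sum_le_sum fun r _ => ?_
      calc ∑ i : Fin (T - 1), ∑ j ∈ Finset.univ \ {i}, ∑ η : Fin (T - 1) → Noi,
            cwt (Noi := Noi) T p s r * cnt (seqTok (Ans := Ans) T s r i j η) (Tok.sub s)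
          ≤ ∑ i : Fin (T - 1), ∑ j ∈ Finset.univ \ {i}, ∑ η : Fin (T - 1) → Noi,
            cwt (Noi := Noi) T p s r := by
            refine Finset.sum_le_sum fun i _ => Finset.sum_le_sum fun j _ =>
              Finset.sum_le_sum fun η _ => ?_
            have h1 := cnt_sub_le (Ans := Ans) s r i j η s
            rw [if_pos rfl] at h1
            calc cwt (Noi := Noi) T p s r * cnt (seqTok (Ans := Ans) T s r i j η) (Tok.sub s)
                ≤ cwt (Noi := Noi) T p s r * 1 :=
                  mul_le_mul_of_nonneg_left h1 (cwt_nonneg T p hp0 s r)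
              _ = cwt (Noi := Noi) T p s r := mul_one _
        _ ≤ p s r := wt_total T p hp0 s r
    · rw [if_neg hs]
      refine le_of_eq (Finset.sum_eq_zero fun r _ => Finset.sum_eq_zero fun i _ =>
        Finset.sum_eq_zero fun j _ => Finset.sum_eq_zero fun η _ => ?_)
      have h1 := cnt_sub_le (Ans := Ans) s r i j η s0
      rw [if_neg hs] at h1
      have h2 := cnt_nonneg (seqTok (Ans := Ans) T s r i j η) (Tok.sub s0)
      rw [le_antisymm h1 h2, mul_zero]
  calc ∑ s : Sub, ∑ r : Rel, ∑ i : Fin (T - 1), ∑ j ∈ Finset.univ \ {i},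
        ∑ η : Fin (T - 1) → Noi,
          cwt (Noi := Noi) T p s r * cnt (seqTok (Ans := Ans) T s r i j η) (Tok.sub s0)
      ≤ ∑ s : Sub, if s = s0 then ∑ r : Rel, p s0 r else 0 :=
        Finset.sum_le_sum fun s _ => key s
    _ = ∑ r : Rel, p s0 r := by rw [Finset.sum_ite_eq' Finset.univ s0]; simp

end Aux5
section Aux6
set_option linter.unusedSectionVars false
set_option maxHeartbeats 1000000
variable {Sub Rel Ans Noi : Type} [Fintype Sub] [Fintype Rel] [Fintype Ans] [Fintype Noi]
  [DecidableEq Sub] [DecidableEq Rel] [DecidableEq Ans] [DecidableEq Noi]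

lemma sum_eta (m : ℕ) (u : Fin m) (n : Noi) :
    ∑ η : Fin m → Noi, ((1 / (Fintype.card Noi : ℝ)) ^ m * if η u = n then (1:ℝ) else 0)
      = 1 / (Fintype.card Noi : ℝ) := by
  have : Nonempty Noi := ⟨n⟩
  have hc : (0:ℝ) < (Fintype.card Noi : ℝ) := by
    exact_mod_cast Fintype.card_pos
  set q : ℝ := 1 / (Fintype.card Noi : ℝ) with hq
  have h1 : ∀ η : Fin m → Noi, q ^ m * (if η u = n then (1:ℝ) else 0)
      = ∏ t : Fin m, (q * if t = u then (if η t = n then (1:ℝ) else 0) else 1) := by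
    intro η
    rw [Finset.prod_mul_distrib, Finset.prod_const, Finset.card_univ, Fintype.card_fin,
      Finset.prod_ite_eq' Finset.univ u]
    simp
  rw [Finset.sum_congr rfl fun η _ => h1 η]
  rw [show (Finset.univ : Finset (Fin m → Noi))
    = Fintype.piFinset (fun _ : Fin m => (Finset.univ : Finset Noi)) from
      (Fintype.piFinset_univ).symm]
  rw [← Finset.prod_univ_sum (t := fun _ : Fin m => (Finset.univ : Finset Noi))
    (f := fun t y => q * if t = u then (if y = n then (1:ℝ) else 0) else 1)]
  have h2 : ∀ t : Fin m,
      (∑ y : Noi, (q * if t = u then (if y = n then (1:ℝ) else 0) else 1))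
        = if t = u then q else 1 := by
    intro t
    by_cases h : t = u
    · subst h
      simp [← Finset.mul_sum, Finset.sum_ite_eq']
    · simp only [if_neg h]
      rw [Finset.sum_const, Finset.card_univ, nsmul_eq_mul, hq]
      field_simp
  rw [Finset.prod_congr rfl fun t _ => h2 t, Finset.prod_ite_eq' Finset.univ u]
  simp

lemma sum_cwt_cnt_noi (T : ℕ) (p : Sub → Rel → ℝ) (hp0 : ∀ s r, 0 ≤ p s r)
    (hp1 : (∑ s : Sub, ∑ r : Rel, p s r) = 1) (n : Noi) :
    ∑ s : Sub, ∑ r : Rel, ∑ i : Fin (T - 1), ∑ j ∈ Finset.univ \ {i},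
        ∑ η : Fin (T - 1) → Noi,
          cwt (Noi := Noi) T p s r * cnt (seqTok (Ans := Ans) T s r i j η) (Tok.noi n)
      ≤ (T : ℝ) / (Fintype.card Noi : ℝ) := by
  have : Nonempty Noi := ⟨n⟩
  have hc : (0:ℝ) < (Fintype.card Noi : ℝ) := by exact_mod_cast Fintype.card_pos
  set q : ℝ := 1 / (Fintype.card Noi : ℝ) with hq
  have hq0 : 0 ≤ q := by positivity
  have key : ∀ (s : Sub) (r : Rel),
      ∑ i : Fin (T - 1), ∑ j ∈ Finset.univ \ {i}, ∑ η : Fin (T - 1) → Noi,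
          cwt (Noi := Noi) T p s r * cnt (seqTok (Ans := Ans) T s r i j η) (Tok.noi n)
        ≤ p s r * ((T : ℝ) * q) := by
    intro s r
    have hd := denom_nonneg T
    have hdiv : 0 ≤ p s r / (((T : ℝ) - 1) * ((T : ℝ) - 2)) := div_nonneg (hp0 s r) hd
    have inner : ∀ (i j : Fin (T - 1)),
        ∑ η : Fin (T - 1) → Noi,
          cwt (Noi := Noi) T p s r * cnt (seqTok (Ans := Ans) T s r i j η) (Tok.noi n)
        ≤ p s r / (((T : ℝ) - 1) * ((T : ℝ) - 2)) * (((T - 1 : ℕ) : ℝ) * q) := by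
      intro i j
      calc ∑ η : Fin (T - 1) → Noi,
            cwt (Noi := Noi) T p s r * cnt (seqTok (Ans := Ans) T s r i j η) (Tok.noi n)
          ≤ ∑ η : Fin (T - 1) → Noi,
            p s r / (((T : ℝ) - 1) * ((T : ℝ) - 2)) *
              (q ^ (T - 1) * ∑ u : Fin (T - 1), if η u = n then (1:ℝ) else 0) := by
            refine Finset.sum_le_sum fun η _ => ?_
            unfold cwt
            rw [mul_assoc, ← hq]
            refine mul_le_mul_of_nonneg_left ?_ hdiv
            exact mul_le_mul_of_nonneg_left (cnt_noi_le s r i j η n) (by positivity)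
        _ = p s r / (((T : ℝ) - 1) * ((T : ℝ) - 2)) * (((T - 1 : ℕ) : ℝ) * q) := by
            rw [← Finset.mul_sum]
            congr 1
            calc ∑ η : Fin (T - 1) → Noi,
                  q ^ (T - 1) * ∑ u : Fin (T - 1), (if η u = n then (1:ℝ) else 0)
                = ∑ η : Fin (T - 1) → Noi, ∑ u : Fin (T - 1),
                    q ^ (T - 1) * (if η u = n then (1:ℝ) else 0) := by
                  exact Finset.sum_congr rfl fun η _ => Finset.mul_sum _ _ _
              _ = ∑ u : Fin (T - 1), ∑ η : Fin (T - 1) → Noi,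
                    q ^ (T - 1) * (if η u = n then (1:ℝ) else 0) := Finset.sum_comm
              _ = ∑ u : Fin (T - 1), q := by
                  refine Finset.sum_congr rfl fun u _ => ?_
                  rw [hq]
                  exact sum_eta (T - 1) u n
              _ = ((T - 1 : ℕ) : ℝ) * q := by
                  rw [Finset.sum_const, Finset.card_univ, Fintype.card_fin, nsmul_eq_mul]
    have hcard : ∀ i : Fin (T - 1), (Finset.univ \ {i} : Finset (Fin (T - 1))).card
        = T - 1 - 1 := by
      intro i
      rw [Finset.card_sdiff_of_subset (by simp)]
      simp
    calc ∑ i : Fin (T - 1), ∑ j ∈ Finset.univ \ {i}, ∑ η : Fin (T - 1) → Noi,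
          cwt (Noi := Noi) T p s r * cnt (seqTok (Ans := Ans) T s r i j η) (Tok.noi n)
        ≤ ∑ i : Fin (T - 1), ∑ j ∈ Finset.univ \ {i},
            p s r / (((T : ℝ) - 1) * ((T : ℝ) - 2)) * (((T - 1 : ℕ) : ℝ) * q) :=
          Finset.sum_le_sum fun i _ => Finset.sum_le_sum fun j _ => inner i j
      _ = ((T - 1 : ℕ) : ℝ) * ((T - 1 - 1 : ℕ) : ℝ) *
            (p s r / (((T : ℝ) - 1) * ((T : ℝ) - 2)) * (((T - 1 : ℕ) : ℝ) * q)) := by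
          rw [Finset.sum_congr rfl fun i _ => by
            rw [Finset.sum_const, hcard i, nsmul_eq_mul]]
          rw [Finset.sum_const, Finset.card_univ, Fintype.card_fin, nsmul_eq_mul]
          ring
      _ = p s r * (((T - 1 : ℕ) : ℝ) * ((T - 1 - 1 : ℕ) : ℝ)
            * (1 / (((T : ℝ) - 1) * ((T : ℝ) - 2)))) * (((T - 1 : ℕ) : ℝ) * q) := by
          ring
      _ ≤ p s r * 1 * ((T : ℝ) * q) := by
          have h1 : p s r * (((T - 1 : ℕ) : ℝ) * ((T - 1 - 1 : ℕ) : ℝ)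
              * (1 / (((T : ℝ) - 1) * ((T : ℝ) - 2)))) ≤ p s r * 1 :=
            mul_le_mul_of_nonneg_left (pairs_le T) (hp0 s r)
          have h2 : (((T - 1 : ℕ) : ℝ)) * q ≤ (T : ℝ) * q :=
            mul_le_mul_of_nonneg_right (by exact_mod_cast Nat.sub_le T 1) hq0
          have h3 : 0 ≤ (((T - 1 : ℕ) : ℝ)) * q := by positivity
          have h4 : 0 ≤ p s r * 1 := by simpa using hp0 s r
          exact mul_le_mul h1 h2 h3 h4
      _ = p s r * ((T : ℝ) * q) := by ring
  calc ∑ s : Sub, ∑ r : Rel, ∑ i : Fin (T - 1), ∑ j ∈ Finset.univ \ {i},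
        ∑ η : Fin (T - 1) → Noi,
          cwt (Noi := Noi) T p s r * cnt (seqTok (Ans := Ans) T s r i j η) (Tok.noi n)
      ≤ ∑ s : Sub, ∑ r : Rel, p s r * ((T : ℝ) * q) :=
        Finset.sum_le_sum fun s _ => Finset.sum_le_sum fun r _ => key s r
    _ = (∑ s : Sub, ∑ r : Rel, p s r) * ((T : ℝ) * q) := by
        rw [Finset.sum_congr rfl fun s _ => (Finset.sum_mul Finset.univ
          (fun r => p s r) ((T : ℝ) * q)).symm]
        rw [← Finset.sum_mul]
    _ = (T : ℝ) / (Fintype.card Noi : ℝ) := by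
        rw [hp1, one_mul, hq]
        ring

end Aux6
section Aux7
set_option linter.unusedSectionVars false
set_option maxHeartbeats 1000000
variable {Sub Rel Ans Noi : Type} [Fintype Sub] [Fintype Rel] [Fintype Ans] [Fintype Noi]
  [DecidableEq Sub] [DecidableEq Rel] [DecidableEq Ans] [DecidableEq Noi]

lemma phat_nonneg {T : ℕ} (θ : Param Sub Rel Ans Noi) (zs : Fin T → Tok Sub Rel Ans Noi)
    (a : Ans) : 0 ≤ phat θ zs a := by
  unfold phat
  positivity

lemma phat_sum_one {T : ℕ} [Nonempty Ans] (θ : Param Sub Rel Ans Noi)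
    (zs : Fin T → Tok Sub Rel Ans Noi) : ∑ a : Ans, phat θ zs a = 1 := by
  unfold phat
  rw [← Finset.sum_div]
  exact div_self (ne_of_gt (sumexp_pos θ zs))

lemma phat_combo_bound {T : ℕ} (θ : Param Sub Rel Ans Noi)
    (zs : Fin T → Tok Sub Rel Ans Noi) (a0 : Ans) (z : Tok Sub Rel Ans Noi) :
    |∑ a : Ans, phat θ zs a * WOV θ a z - WOV θ a0 z|
      ≤ 2 * Real.sqrt (∑ a : Ans, (WOV θ a z) ^ 2) := by
  have : Nonempty Ans := ⟨a0⟩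
  set W := Real.sqrt (∑ a : Ans, (WOV θ a z) ^ 2) with hW
  have hW0 : 0 ≤ W := Real.sqrt_nonneg _
  have hWb : ∀ a : Ans, |WOV θ a z| ≤ W := by
    intro a
    rw [hW, ← Real.sqrt_sq_eq_abs]
    exact Real.sqrt_le_sqrt (Finset.single_le_sum
      (f := fun a : Ans => (WOV θ a z) ^ 2) (fun a _ => sq_nonneg _) (Finset.mem_univ a))
  calc |∑ a : Ans, phat θ zs a * WOV θ a z - WOV θ a0 z|
      ≤ |∑ a : Ans, phat θ zs a * WOV θ a z| + |WOV θ a0 z| := abs_sub _ _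
    _ ≤ (∑ a : Ans, |phat θ zs a * WOV θ a z|) + W :=
        add_le_add (Finset.abs_sum_le_sum_abs _ _) (hWb a0)
    _ ≤ (∑ a : Ans, phat θ zs a * W) + W := by
        refine add_le_add_left (Finset.sum_le_sum fun a _ => ?_) W
        rw [abs_mul, abs_of_nonneg (phat_nonneg θ zs a)]
        exact mul_le_mul_of_nonneg_left (hWb a) (phat_nonneg θ zs a)
    _ = 2 * W := by
        rw [← Finset.sum_mul, phat_sum_one, one_mul]
        ring

lemma dLoss_inr_abs_le (T : ℕ) (p : Sub → Rel → ℝ) (astar : Sub → Rel → Ans)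
    (hp0 : ∀ s r, 0 ≤ p s r) (θ : Param Sub Rel Ans Noi) (z : Tok Sub Rel Ans Noi)
    (cb : ℝ)
    (hcb : ∑ s : Sub, ∑ r : Rel, ∑ i : Fin (T - 1), ∑ j ∈ Finset.univ \ {i},
        ∑ η : Fin (T - 1) → Noi,
          cwt (Noi := Noi) T p s r * cnt (seqTok (Ans := Ans) T s r i j η) z ≤ cb) :
    |dLoss T p astar θ (EuclideanSpace.single (Sum.inr z) 1)|
      ≤ 2 * Real.sqrt (∑ a : Ans, (WOV θ a z) ^ 2) * cb := by
  set W := Real.sqrt (∑ a : Ans, (WOV θ a z) ^ 2) with hW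
  have hW0 : 0 ≤ W := Real.sqrt_nonneg _
  rw [dLoss_apply]
  have hterm : ∀ (s : Sub) (r : Rel) (i j : Fin (T - 1)) (η : Fin (T - 1) → Noi),
      |cwt (Noi := Noi) T p s r *
          ((∑ a : Ans, phat θ (seqTok T s r i j η) a *
              dLogit θ (seqTok T s r i j η) a (EuclideanSpace.single (Sum.inr z) 1))
            - dLogit θ (seqTok T s r i j η) (astar s r)
                (EuclideanSpace.single (Sum.inr z) 1))|
      ≤ cwt (Noi := Noi) T p s r * cnt (seqTok (Ans := Ans) T s r i j η) z * (2 * W) := by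
    intro s r i j η
    simp only [dLogit_apply_inr]
    have hfac : (∑ a : Ans, phat θ (seqTok T s r i j η) a *
          (cnt (seqTok (Ans := Ans) T s r i j η) z * WOV θ a z))
        - cnt (seqTok (Ans := Ans) T s r i j η) z * WOV θ (astar s r) z
      = cnt (seqTok (Ans := Ans) T s r i j η) z *
          ((∑ a : Ans, phat θ (seqTok T s r i j η) a * WOV θ a z)
            - WOV θ (astar s r) z) := by
      rw [Finset.sum_congr rfl fun a _ => mul_left_comm _ _ _, ← Finset.mul_sum]
      ring
    rw [hfac, abs_mul, abs_mul,
      abs_of_nonneg (cwt_nonneg T p hp0 s r),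
      abs_of_nonneg (cnt_nonneg _ z), mul_assoc]
    refine mul_le_mul_of_nonneg_left ?_ (cwt_nonneg T p hp0 s r)
    exact mul_le_mul_of_nonneg_left (phat_combo_bound θ _ (astar s r) z)
      (cnt_nonneg _ z)
  calc |∑ s : Sub, ∑ r : Rel, ∑ i : Fin (T - 1), ∑ j ∈ Finset.univ \ {i},
        ∑ η : Fin (T - 1) → Noi,
          cwt (Noi := Noi) T p s r *
            ((∑ a : Ans, phat θ (seqTok T s r i j η) a *
                dLogit θ (seqTok T s r i j η) a (EuclideanSpace.single (Sum.inr z) 1))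
              - dLogit θ (seqTok T s r i j η) (astar s r)
                  (EuclideanSpace.single (Sum.inr z) 1))|
      ≤ ∑ s : Sub, ∑ r : Rel, ∑ i : Fin (T - 1), ∑ j ∈ Finset.univ \ {i},
          ∑ η : Fin (T - 1) → Noi,
            cwt (Noi := Noi) T p s r * cnt (seqTok (Ans := Ans) T s r i j η) z * (2 * W) := by
        refine le_trans (Finset.abs_sum_le_sum_abs _ _) (Finset.sum_le_sum fun s _ => ?_)
        refine le_trans (Finset.abs_sum_le_sum_abs _ _) (Finset.sum_le_sum fun r _ => ?_)
        refine le_trans (Finset.abs_sum_le_sum_abs _ _) (Finset.sum_le_sum fun i _ => ?_)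
        refine le_trans (Finset.abs_sum_le_sum_abs _ _) (Finset.sum_le_sum fun j _ => ?_)
        refine le_trans (Finset.abs_sum_le_sum_abs _ _) (Finset.sum_le_sum fun η _ => ?_)
        exact hterm s r i j η
    _ = (∑ s : Sub, ∑ r : Rel, ∑ i : Fin (T - 1), ∑ j ∈ Finset.univ \ {i},
          ∑ η : Fin (T - 1) → Noi,
            cwt (Noi := Noi) T p s r * cnt (seqTok (Ans := Ans) T s r i j η) z) * (2 * W) := by
        simp only [← Finset.sum_mul]
    _ ≤ cb * (2 * W) := mul_le_mul_of_nonneg_right hcb (by positivity)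
    _ = 2 * W * cb := by ring

end Aux7
section Aux8
set_option linter.unusedSectionVars false
set_option maxHeartbeats 1000000
variable {Sub Rel Ans Noi : Type} [Fintype Sub] [Fintype Rel] [Fintype Ans] [Fintype Noi]
  [DecidableEq Sub] [DecidableEq Rel] [DecidableEq Ans] [DecidableEq Noi]

lemma hasDerivAt_coord {ι : Type} [Fintype ι] (f : ℝ → EuclideanSpace ℝ ι)
    (f' : EuclideanSpace ℝ ι) (t : ℝ) (hf : HasDerivAt f f' t) (k : ι) :
    HasDerivAt (fun u => f u k) (f' k) t := by
  have h : HasDerivAt (fun u => (EuclideanSpace.proj (𝕜 := ℝ) k) (f u))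
      ((EuclideanSpace.proj (𝕜 := ℝ) k) f') t :=
    (ContinuousLinearMap.hasFDerivAt _).comp_hasDerivAt t hf
  simpa using h

lemma main_bound (T : ℕ) (p : Sub → Rel → ℝ) (astar : Sub → Rel → Ans)
    (hp0 : ∀ s r, 0 ≤ p s r) (α : ℝ) (hα : 0 < α)
    (θfun : ℝ → Param Sub Rel Ans Noi)
    (hinitOV : ∀ (a : Ans) (z : Tok Sub Rel Ans Noi), WOV (θfun 0) a z = α)
    (hinitKQ : ∀ z : Tok Sub Rel Ans Noi,
      WKQ (θfun 0) z = α * Real.sqrt (Fintype.card Ans + 1))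
    (hflow : ∀ t : ℝ,
      HasDerivAt θfun (-(gradient (lossLin T p astar) (θfun t))) t)
    (z : Tok Sub Rel Ans Noi) (cb : ℝ) (hcb0 : 0 ≤ cb)
    (hcb : ∑ s : Sub, ∑ r : Rel, ∑ i : Fin (T - 1), ∑ j ∈ Finset.univ \ {i},
        ∑ η : Fin (T - 1) → Noi,
          cwt (Noi := Noi) T p s r * cnt (seqTok (Ans := Ans) T s r i j η) z ≤ cb)
    (t : ℝ) (ht : 0 ≤ t) :
    WKQ (θfun t) z ≤ Real.exp (2 * cb * t) * α * Real.sqrt (Fintype.card Ans + 1) := by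
  classical
  set k : ℝ → ℝ := fun u => θfun u (Sum.inr z) with hkdef
  set G : ℝ → ℝ := fun u =>
    dLoss T p astar (θfun u) (EuclideanSpace.single (Sum.inr z) 1) with hGdef
  set GO : Ans → ℝ → ℝ := fun a u =>
    dLoss T p astar (θfun u) (EuclideanSpace.single (Sum.inl (a, z)) 1) with hGOdef
  have hk : ∀ u : ℝ, HasDerivAt k (-(G u)) u := by
    intro u
    have h := hasDerivAt_coord θfun _ u (hflow u) (Sum.inr z)
    have hco : (-(gradient (lossLin T p astar) (θfun u))) (Sum.inr z) = -(G u) := by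
      have h1 : (-(gradient (lossLin T p astar) (θfun u))) (Sum.inr z)
          = -((gradient (lossLin T p astar) (θfun u)) (Sum.inr z)) := rfl
      rw [h1, grad_coord _ _ _ (hasFDerivAt_loss T p astar (θfun u)) (Sum.inr z)]
    rwa [hco] at h
  have hwa : ∀ (a : Ans) (u : ℝ),
      HasDerivAt (fun v => θfun v (Sum.inl (a, z))) (-(GO a u)) u := by
    intro a u
    have h := hasDerivAt_coord θfun _ u (hflow u) (Sum.inl (a, z))
    have hco : (-(gradient (lossLin T p astar) (θfun u))) (Sum.inl (a, z))
        = -(GO a u) := by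
      have h1 : (-(gradient (lossLin T p astar) (θfun u))) (Sum.inl (a, z))
          = -((gradient (lossLin T p astar) (θfun u)) (Sum.inl (a, z))) := rfl
      rw [h1, grad_coord _ _ _ (hasFDerivAt_loss T p astar (θfun u)) (Sum.inl (a, z))]
    rwa [hco] at h
  set E : ℝ → ℝ := fun u => (k u) ^ 2 - ∑ a : Ans, (θfun u (Sum.inl (a, z))) ^ 2 with hEdef
  have hE : ∀ u : ℝ, HasDerivAt E 0 u := by
    intro u
    have h1 := ((hk u).fun_pow 2).fun_sub
      (HasDerivAt.fun_sum (fun a (_ : a ∈ Finset.univ) => ((hwa a u).fun_pow 2)))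
    refine h1.congr_deriv ?_
    have hbal := balance T p astar (θfun u) z
    unfold WKQ WOV at hbal
    simp only [Nat.cast_ofNat, show (2:ℕ) - 1 = 1 from rfl, pow_one]
    have h2 : ∑ a : Ans, 2 * θfun u (Sum.inl (a, z)) * (-(GO a u))
        = -2 * ∑ a : Ans, θfun u (Sum.inl (a, z)) * GO a u := by
      rw [Finset.mul_sum]
      exact Finset.sum_congr rfl fun a _ => by ring
    rw [h2, ← hbal]
    ring
  have hEconst : ∀ u : ℝ, E u = E 0 := by
    intro u
    exact is_const_of_deriv_eq_zero (fun x => (hE x).differentiableAt)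
      (fun x => (hE x).deriv) u 0
  have hcA : (0:ℝ) ≤ (Fintype.card Ans : ℝ) + 1 := by positivity
  have hk0 : k 0 = α * Real.sqrt ((Fintype.card Ans : ℝ) + 1) := hinitKQ z
  have hk00 : 0 ≤ k 0 := by
    rw [hk0]; positivity
  have hE0 : E 0 = α ^ 2 := by
    rw [hEdef]
    simp only
    rw [hk0]
    have hov : ∀ a : Ans, θfun 0 (Sum.inl (a, z)) = α := fun a => hinitOV a z
    rw [Finset.sum_congr rfl fun a _ => by rw [hov a]]
    rw [Finset.sum_const, Finset.card_univ, nsmul_eq_mul, mul_pow,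
      Real.sq_sqrt hcA]
    ring
  have hweq : ∀ u : ℝ, ∑ a : Ans, (θfun u (Sum.inl (a, z))) ^ 2 = (k u) ^ 2 - α ^ 2 := by
    intro u
    have := hEconst u
    rw [hE0] at this
    rw [hEdef] at this
    simp only at this
    linarith
  have hWle : ∀ u : ℝ, Real.sqrt (∑ a : Ans, (WOV (θfun u) a z) ^ 2) ≤ |k u| := by
    intro u
    have h1 : ∑ a : Ans, (WOV (θfun u) a z) ^ 2 = (k u) ^ 2 - α ^ 2 := hweq u
    rw [h1, ← Real.sqrt_sq_eq_abs]
    apply Real.sqrt_le_sqrt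
    nlinarith [sq_nonneg α]
  have hv : ∀ u : ℝ, HasDerivAt (fun x => (k x) ^ 2) (2 * k u * (-(G u))) u := by
    intro u
    have := (hk u).fun_pow 2
    simpa using this
  have hvle : ∀ u : ℝ, 2 * k u * (-(G u)) ≤ 4 * cb * (k u) ^ 2 := by
    intro u
    have hG : |G u| ≤ 2 * Real.sqrt (∑ a : Ans, (WOV (θfun u) a z) ^ 2) * cb :=
      dLoss_inr_abs_le T p astar hp0 (θfun u) z cb hcb
    have hS0 : 0 ≤ Real.sqrt (∑ a : Ans, (WOV (θfun u) a z) ^ 2) := Real.sqrt_nonneg _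
    have hK := hWle u
    calc 2 * k u * (-(G u)) ≤ 2 * |k u * G u| := by
          have := neg_le_abs (k u * G u)
          nlinarith
      _ = 2 * (|k u| * |G u|) := by rw [abs_mul]
      _ ≤ 2 * (|k u| * (2 * Real.sqrt (∑ a : Ans, (WOV (θfun u) a z) ^ 2) * cb)) := by
          have := mul_le_mul_of_nonneg_left hG (abs_nonneg (k u))
          nlinarith
      _ ≤ 2 * (|k u| * (2 * |k u| * cb)) := by
          have h2 : 2 * Real.sqrt (∑ a : Ans, (WOV (θfun u) a z) ^ 2) * cb
              ≤ 2 * |k u| * cb := by nlinarith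
          nlinarith [abs_nonneg (k u)]
      _ = 4 * cb * |k u| ^ 2 := by ring
      _ = 4 * cb * (k u) ^ 2 := by rw [sq_abs]
  set U : ℝ → ℝ := fun x => Real.exp (-(4 * cb) * x) * (k x) ^ 2 with hUdef
  have hU : ∀ x : ℝ, HasDerivAt U
      (Real.exp (-(4 * cb) * x) * (-(4 * cb)) * (k x) ^ 2
        + Real.exp (-(4 * cb) * x) * (2 * k x * (-(G x)))) x := by
    intro x
    have h := (((hasDerivAt_id x).const_mul (-(4 * cb))).exp).mul (hv x)
    simp only [id_eq, mul_one] at h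
    rw [hUdef]
    exact h
  have hUderiv : ∀ x : ℝ,
      Real.exp (-(4 * cb) * x) * (-(4 * cb)) * (k x) ^ 2
        + Real.exp (-(4 * cb) * x) * (2 * k x * (-(G x))) ≤ 0 := by
    intro x
    have h1 := hvle x
    have h2 := Real.exp_pos (-(4 * cb) * x)
    nlinarith
  have hanti : Antitone U :=
    antitone_of_deriv_nonpos (fun x => (hU x).differentiableAt)
      (fun x => by rw [(hU x).deriv]; exact hUderiv x)
  have hU0 : U 0 = (k 0) ^ 2 := by
    rw [hUdef]; simp
  have hUt : U t ≤ (k 0) ^ 2 := by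
    rw [← hU0]
    exact hanti ht
  have hkt2 : (k t) ^ 2 ≤ Real.exp (4 * cb * t) * (k 0) ^ 2 := by
    have h := mul_le_mul_of_nonneg_left hUt (le_of_lt (Real.exp_pos (4 * cb * t)))
    rw [hUdef] at h
    simp only at h
    rw [← mul_assoc, ← Real.exp_add] at h
    simpa using h
  calc WKQ (θfun t) z = k t := rfl
    _ ≤ |k t| := le_abs_self _
    _ = Real.sqrt ((k t) ^ 2) := (Real.sqrt_sq_eq_abs _).symm
    _ ≤ Real.sqrt (Real.exp (4 * cb * t) * (k 0) ^ 2) := Real.sqrt_le_sqrt hkt2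
    _ = Real.exp (2 * cb * t) * k 0 := by
        rw [Real.sqrt_mul (le_of_lt (Real.exp_pos _)), Real.sqrt_sq hk00,
          ← Real.exp_half]
        ring_nf
    _ = Real.exp (2 * cb * t) * α * Real.sqrt (Fintype.card Ans + 1) := by
        rw [hk0]; ring

end Aux8

theorem subject_and_noise_weights_grow_slowly
    (Sub Rel Ans Noi : Type) [Fintype Sub] [Fintype Rel] [Fintype Ans] [Fintype Noi]
    [DecidableEq Sub] [DecidableEq Rel] [DecidableEq Ans] [DecidableEq Noi]
    (T : ℕ) (p : Sub → Rel → ℝ) (astar : Sub → Rel → Ans)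
    (hp0 : ∀ s r, 0 ≤ p s r) (hp1 : (∑ s : Sub, ∑ r : Rel, p s r) = 1)
    (hdisj : ∀ r r' : Rel, r ≠ r' →
      Disjoint (Finset.univ.image fun s => astar s r)
        (Finset.univ.image fun s => astar s r'))
    (α : ℝ) (hα : 0 < α)
    (θfun : ℝ → Param Sub Rel Ans Noi)
    (hinitOV : ∀ (a : Ans) (z : Tok Sub Rel Ans Noi), WOV (θfun 0) a z = α)
    (hinitKQ : ∀ z : Tok Sub Rel Ans Noi,
      WKQ (θfun 0) z = α * Real.sqrt (Fintype.card Ans + 1))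
    (hflow : ∀ t : ℝ,
      HasDerivAt θfun (-(gradient (lossLin T p astar) (θfun t))) t) :
    (∀ (s : Sub) (t : ℝ), 0 ≤ t →
      WKQ (θfun t) (Tok.sub s) ≤
        Real.exp (2 * (∑ r : Rel, p s r) * t) * α * Real.sqrt (Fintype.card Ans + 1)) ∧
    (∀ (n : Noi) (t : ℝ), 0 ≤ t →
      WKQ (θfun t) (Tok.noi n) ≤
        Real.exp (2 * T * t / (Fintype.card Noi : ℝ)) * α *
          Real.sqrt (Fintype.card Ans + 1)) := by
  classical
  constructor
  · intro s t ht
    have hcb0 : 0 ≤ ∑ r : Rel, p s r := Finset.sum_nonneg fun r _ => hp0 s r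
    exact main_bound T p astar hp0 α hα θfun hinitOV hinitKQ hflow (Tok.sub s)
      (∑ r : Rel, p s r) hcb0 (sum_cwt_cnt_sub T p hp0 s) t ht
  · intro n t ht
    have hcb0 : 0 ≤ (T : ℝ) / (Fintype.card Noi : ℝ) := by positivity
    have h := main_bound T p astar hp0 α hα θfun hinitOV hinitKQ hflow (Tok.noi n)
      ((T : ℝ) / (Fintype.card Noi : ℝ)) hcb0 (sum_cwt_cnt_noi T p hp0 hp1 n) t ht
    rw [show 2 * ((T : ℝ) / (Fintype.card Noi : ℝ)) * t
        = 2 * (T : ℝ) * t / (Fintype.card Noi : ℝ) from by ring] at h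
    exact h
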